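/- Let B = (b_{ij}) be an n×n integer matrix, D = diag(d_1,…,d_n) with d_i positive integers such that DB is skew-symmetric, and let Λ be a skew-symmetric integer n×n matrix with BᵗΛ = D. Define B⁻ (resp. B⁺) by putting 1's on the diagonal and entries −[b_{ij}]₊ (resp. −[−b_{ij}]₊) off the diagonal, and for e ∈ ℤⁿ set *e = B⁻e and e* = B⁺e. Let ⟨·,·⟩ be the bilinear form with ⟨α_i,α_j⟩ = d_i if i=j and −[d_i b_{ij}]₊ if i≠j (α_i the standard basis), and let b^i denote the i-th column of B. Then: (1) for all c ∈ ℤⁿ, Λ(b^i, *c) = ⟨α_i, c⟩ and Λ(c*, b^j) = −⟨c, α_j⟩; (2) for all b, c ∈ ℤⁿ, Λ(b*−*b, c*−*c) = ⟨c,b⟩ − ⟨b,c⟩; (3) for all b, c, v, w ∈ ℤⁿ, Λ(−b*−*(v−b), −c*−*(w−c)) = Λ(*v,*w) − ⟨c, v−b⟩ + ⟨b, w−c⟩. -/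
import Mathlib


noncomputable section

open Matrix

/-- `B⁻`: `1`'s on the diagonal and `-[b_{ij}]₊` off the diagonal. -/
def Bminus {n : ℕ} (B : Matrix (Fin n) (Fin n) ℤ) (i j : Fin n) : ℤ :=
  if i = j then 1 else - max 0 (B i j)

/-- `B⁺`: `1`'s on the diagonal and `-[-b_{ij}]₊` off the diagonal. -/
def Bplus {n : ℕ} (B : Matrix (Fin n) (Fin n) ℤ) (i j : Fin n) : ℤ :=
  if i = j then 1 else - max 0 (-(B i j))

/-- The left dual `*e = B⁻ e`. -/
def lstar {n : ℕ} (B : Matrix (Fin n) (Fin n) ℤ) (e : Fin n → ℤ) : Fin n → ℤ :=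
  fun i => ∑ j, Bminus B i j * e j

/-- The right dual `e* = B⁺ e`. -/
def rstar {n : ℕ} (B : Matrix (Fin n) (Fin n) ℤ) (e : Fin n → ℤ) : Fin n → ℤ :=
  fun i => ∑ j, Bplus B i j * e j

/-- The bilinear form `⟨·,·⟩` with `⟨α_i,α_j⟩ = d_i` for `i = j` and
`-[d_i b_{ij}]₊` for `i ≠ j`. -/
def euler {n : ℕ} (d : Fin n → ℤ) (B : Matrix (Fin n) (Fin n) ℤ) (v w : Fin n → ℤ) : ℤ :=
  ∑ i, ∑ j, v i * (if i = j then d i else - max 0 (d i * B i j)) * w j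

/-- The skew-symmetric bilinear form `Λ(a,b) = aᵗ Λ b`. -/
def lam {n : ℕ} (Λ : Matrix (Fin n) (Fin n) ℤ) (a b : Fin n → ℤ) : ℤ :=
  ∑ i, ∑ j, a i * Λ i j * b j

namespace CompatAux

variable {n : ℕ}

/-- The matrix of the Euler form. -/
def Mform (d : Fin n → ℤ) (B : Matrix (Fin n) (Fin n) ℤ) (i j : Fin n) : ℤ :=
  if i = j then d i else - max 0 (d i * B i j)

lemma euler_def (d : Fin n → ℤ) (B : Matrix (Fin n) (Fin n) ℤ) (v w : Fin n → ℤ) :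
    euler d B v w = ∑ i, ∑ j, v i * Mform d B i j * w j := rfl

lemma lam_skew (Λ : Matrix (Fin n) (Fin n) ℤ) (hΛ : ∀ i j, Λ i j = - Λ j i)
    (a b : Fin n → ℤ) : lam Λ a b = - lam Λ b a := by
  unfold lam
  calc ∑ i, ∑ j, a i * Λ i j * b j = ∑ i, ∑ j, -(b j * Λ j i * a i) :=
        Finset.sum_congr rfl fun i _ => Finset.sum_congr rfl fun j _ => by
          rw [hΛ i j]; ring
    _ = - ∑ i, ∑ j, b i * Λ i j * a j := by
        rw [Finset.sum_comm]
        simp [← Finset.sum_neg_distrib]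

lemma lam_col (B Λ : Matrix (Fin n) (Fin n) ℤ) (d : Fin n → ℤ)
    (hcompat : Bᵀ * Λ = Matrix.diagonal d) (i : Fin n) (x : Fin n → ℤ) :
    lam Λ (fun r => B r i) x = d i * x i := by
  have h : ∀ j, (∑ r, B r i * Λ r j) = Matrix.diagonal d i j := fun j => by
    simpa [Matrix.mul_apply, Matrix.transpose_apply] using congrFun (congrFun hcompat i) j
  calc lam Λ (fun r => B r i) x
      = ∑ j, (∑ r, B r i * Λ r j) * x j := by
        rw [lam, Finset.sum_comm]
        exact Finset.sum_congr rfl fun j _ => by rw [Finset.sum_mul]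
    _ = ∑ j, Matrix.diagonal d i j * x j := by
        exact Finset.sum_congr rfl fun j _ => by rw [h]
    _ = d i * x i := by
        simp [Matrix.diagonal_apply, ite_mul, zero_mul]

lemma lam_mulVec (B Λ : Matrix (Fin n) (Fin n) ℤ) (d : Fin n → ℤ)
    (hcompat : Bᵀ * Λ = Matrix.diagonal d) (e x : Fin n → ℤ) :
    lam Λ (fun r => ∑ i, B r i * e i) x = ∑ i, d i * e i * x i := by
  calc lam Λ (fun r => ∑ i, B r i * e i) x
      = ∑ r, ∑ j, (∑ i, B r i * e i) * Λ r j * x j := rfl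
    _ = ∑ r, ∑ j, ∑ i, (e i * (B r i * Λ r j * x j)) := by
        refine Finset.sum_congr rfl fun r _ => Finset.sum_congr rfl fun j _ => ?_
        rw [Finset.sum_mul, Finset.sum_mul]
        exact Finset.sum_congr rfl fun i _ => by ring
    _ = ∑ r, ∑ i, ∑ j, (e i * (B r i * Λ r j * x j)) :=
        Finset.sum_congr rfl fun r _ => Finset.sum_comm
    _ = ∑ i, ∑ r, ∑ j, (e i * (B r i * Λ r j * x j)) := Finset.sum_comm
    _ = ∑ i, e i * (∑ r, ∑ j, B r i * Λ r j * x j) := by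
        refine Finset.sum_congr rfl fun i _ => ?_
        simp [Finset.mul_sum]
    _ = ∑ i, e i * (d i * x i) := by
        refine Finset.sum_congr rfl fun i _ => ?_
        rw [← lam_col B Λ d hcompat i x]; rfl
    _ = ∑ i, d i * e i * x i := Finset.sum_congr rfl fun i _ => by ring

lemma lam_expand (Λ : Matrix (Fin n) (Fin n) ℤ) (p q s t : Fin n → ℤ) :
    lam Λ (fun r => -(p r + q r)) (fun r => -(s r + t r))
      = lam Λ p s + lam Λ p t + lam Λ q s + lam Λ q t := by
  unfold lam
  calc ∑ i, ∑ j, (-(p i + q i)) * Λ i j * (-(s j + t j))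
      = ∑ i, ∑ j, (p i * Λ i j * s j + p i * Λ i j * t j
          + q i * Λ i j * s j + q i * Λ i j * t j) :=
        Finset.sum_congr rfl fun i _ => Finset.sum_congr rfl fun j _ => by ring
    _ = _ := by simp [Finset.sum_add_distrib]

lemma Bdiag (B : Matrix (Fin n) (Fin n) ℤ) (d : Fin n → ℤ) (hd : ∀ i, 0 < d i)
    (hDBskew : ∀ i j, d i * B i j = -(d j * B j i)) (r : Fin n) : B r r = 0 := by
  have h1 : d r * B r r = 0 := by linarith [hDBskew r r]
  rcases mul_eq_zero.mp h1 with h | h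
  · exact absurd h (hd r).ne'
  · exact h

lemma Bdiff (B : Matrix (Fin n) (Fin n) ℤ) (d : Fin n → ℤ) (hd : ∀ i, 0 < d i)
    (hDBskew : ∀ i j, d i * B i j = -(d j * B j i)) (r j : Fin n) :
    Bplus B r j - Bminus B r j = B r j := by
  unfold Bplus Bminus
  rcases eq_or_ne r j with h | h
  · subst h; simp [Bdiag B d hd hDBskew r]
  · simp only [if_neg h]
    omega

lemma Mdiff (B : Matrix (Fin n) (Fin n) ℤ) (d : Fin n → ℤ) (hd : ∀ i, 0 < d i)
    (hDBskew : ∀ i j, d i * B i j = -(d j * B j i)) (i j : Fin n) :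
    Mform d B j i - Mform d B i j = d i * B i j := by
  unfold Mform
  rcases eq_or_ne i j with h | h
  · subst h; simp [Bdiag B d hd hDBskew]
  · rw [if_neg (Ne.symm h), if_neg h]
    have hs := hDBskew i j
    omega

lemma dBminus (B : Matrix (Fin n) (Fin n) ℤ) (d : Fin n → ℤ) (hd : ∀ i, 0 < d i)
    (i j : Fin n) : d i * Bminus B i j = Mform d B i j := by
  unfold Bminus Mform
  rcases eq_or_ne i j with h | h
  · simp [h]
  · rw [if_neg h, if_neg h, mul_neg, mul_max_of_nonneg _ _ (hd i).le, mul_zero]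

lemma dBplus (B : Matrix (Fin n) (Fin n) ℤ) (d : Fin n → ℤ) (hd : ∀ i, 0 < d i)
    (hDBskew : ∀ i j, d i * B i j = -(d j * B j i)) (j k : Fin n) :
    d j * Bplus B j k = Mform d B k j := by
  unfold Bplus Mform
  rcases eq_or_ne k j with h | h
  · subst h; simp
  · rw [if_neg (Ne.symm h), if_neg h, mul_neg, mul_max_of_nonneg _ _ (hd j).le,
      mul_zero, mul_neg, hDBskew k j]

lemma dlstar (B : Matrix (Fin n) (Fin n) ℤ) (d : Fin n → ℤ) (hd : ∀ i, 0 < d i)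
    (i : Fin n) (c : Fin n → ℤ) :
    d i * lstar B c i = ∑ j, Mform d B i j * c j := by
  unfold lstar
  rw [Finset.mul_sum]
  exact Finset.sum_congr rfl fun j _ => by rw [← mul_assoc, dBminus B d hd]

lemma drstar (B : Matrix (Fin n) (Fin n) ℤ) (d : Fin n → ℤ) (hd : ∀ i, 0 < d i)
    (hDBskew : ∀ i j, d i * B i j = -(d j * B j i)) (j : Fin n) (c : Fin n → ℤ) :
    d j * rstar B c j = ∑ k, c k * Mform d B k j := by
  unfold rstar
  rw [Finset.mul_sum]
  refine Finset.sum_congr rfl fun k _ => ?_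
  rw [← mul_assoc, dBplus B d hd hDBskew]; ring

lemma euler_single_left (d : Fin n → ℤ) (B : Matrix (Fin n) (Fin n) ℤ) (i : Fin n)
    (c : Fin n → ℤ) : euler d B (Pi.single i 1) c = ∑ j, Mform d B i j * c j := by
  rw [euler_def, Finset.sum_eq_single i]
  · exact Finset.sum_congr rfl fun j _ => by simp
  · intro k _ hk
    refine Finset.sum_eq_zero fun j _ => ?_
    simp [Pi.single_apply, hk]
  · simp

lemma euler_single_right (d : Fin n → ℤ) (B : Matrix (Fin n) (Fin n) ℤ) (j : Fin n)
    (c : Fin n → ℤ) : euler d B c (Pi.single j 1) = ∑ i, c i * Mform d B i j := by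
  rw [euler_def]
  refine Finset.sum_congr rfl fun i _ => ?_
  rw [Finset.sum_eq_single j]
  · simp
  · intro k _ hk; simp [Pi.single_apply, hk]
  · simp

lemma euler_sub_right (d : Fin n → ℤ) (B : Matrix (Fin n) (Fin n) ℤ) (b w c : Fin n → ℤ) :
    euler d B b (w - c) = euler d B b w - euler d B b c := by
  simp [euler, Pi.sub_apply, mul_sub, Finset.sum_sub_distrib]

lemma lam_Bv_lstar (B Λ : Matrix (Fin n) (Fin n) ℤ) (d : Fin n → ℤ) (hd : ∀ i, 0 < d i)
    (hcompat : Bᵀ * Λ = Matrix.diagonal d) (e x : Fin n → ℤ) :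
    lam Λ (fun r => ∑ i, B r i * e i) (lstar B x) = euler d B e x := by
  rw [lam_mulVec B Λ d hcompat, euler_def]
  refine Finset.sum_congr rfl fun i _ => ?_
  calc d i * e i * lstar B x i = e i * (d i * lstar B x i) := by ring
    _ = e i * ∑ j, Mform d B i j * x j := by rw [dlstar B d hd]
    _ = ∑ j, e i * Mform d B i j * x j := by
        rw [Finset.mul_sum]
        exact Finset.sum_congr rfl fun j _ => by ring

lemma lam_Bv_Bv (B Λ : Matrix (Fin n) (Fin n) ℤ) (d : Fin n → ℤ) (hd : ∀ i, 0 < d i)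
    (hDBskew : ∀ i j, d i * B i j = -(d j * B j i))
    (hcompat : Bᵀ * Λ = Matrix.diagonal d) (b c : Fin n → ℤ) :
    lam Λ (fun r => ∑ i, B r i * b i) (fun r => ∑ i, B r i * c i)
      = euler d B c b - euler d B b c := by
  rw [lam_mulVec B Λ d hcompat, euler_def, euler_def]
  rw [Finset.sum_comm (f := fun i j => c i * Mform d B i j * b j)]
  rw [← Finset.sum_sub_distrib]
  refine Finset.sum_congr rfl fun i _ => ?_
  rw [← Finset.sum_sub_distrib, Finset.mul_sum]
  refine Finset.sum_congr rfl fun j _ => ?_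
  have h := Mdiff B d hd hDBskew i j
  linear_combination (-(b i * c j)) * h

lemma sub_star_eq (B : Matrix (Fin n) (Fin n) ℤ) (d : Fin n → ℤ) (hd : ∀ i, 0 < d i)
    (hDBskew : ∀ i j, d i * B i j = -(d j * B j i)) (e : Fin n → ℤ) :
    rstar B e - lstar B e = fun r => ∑ i, B r i * e i := by
  funext r
  simp only [Pi.sub_apply, rstar, lstar, ← Finset.sum_sub_distrib]
  refine Finset.sum_congr rfl fun j _ => ?_
  have h := Bdiff B d hd hDBskew r j
  linear_combination (e j) * h

end CompatAux

open CompatAux in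
/-- Lemma 3.4 (identities for a compatible pair): Let `B` be an `n × n` integer
matrix, `d_i > 0` with `DB` skew-symmetric, and `Λ` skew-symmetric with `Bᵗ Λ = D`.
Then, writing `b^i` for the `i`-th column of `B` and `α_i` for the standard basis:
(1) `Λ(b^i, *c) = ⟨α_i, c⟩` and `Λ(c*, b^j) = -⟨c, α_j⟩`;
(2) `Λ(b* - *b, c* - *c) = ⟨c,b⟩ - ⟨b,c⟩`;
(3) `Λ(-b* - *(v-b), -c* - *(w-c)) = Λ(*v,*w) - ⟨c, v-b⟩ + ⟨b, w-c⟩`. -/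
theorem compatible_pair_identities (n : ℕ) (B Λ : Matrix (Fin n) (Fin n) ℤ)
    (d : Fin n → ℤ) (hd : ∀ i, 0 < d i)
    (hDBskew : ∀ i j, d i * B i j = -(d j * B j i))
    (hΛskew : ∀ i j, Λ i j = - Λ j i)
    (hcompat : Bᵀ * Λ = Matrix.diagonal d) :
    (∀ (i : Fin n) (c : Fin n → ℤ),
        lam Λ (fun r => B r i) (lstar B c) = euler d B (Pi.single i 1) c) ∧
    (∀ (j : Fin n) (c : Fin n → ℤ),
        lam Λ (rstar B c) (fun r => B r j) = - euler d B c (Pi.single j 1)) ∧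
    (∀ b c : Fin n → ℤ,
        lam Λ (rstar B b - lstar B b) (rstar B c - lstar B c)
          = euler d B c b - euler d B b c) ∧
    (∀ b c v w : Fin n → ℤ,
        lam Λ (-(rstar B b) - lstar B (v - b)) (-(rstar B c) - lstar B (w - c))
          = lam Λ (lstar B v) (lstar B w) - euler d B c (v - b) + euler d B b (w - c)) := by
  refine ⟨?_, ?_, ?_, ?_⟩
  · -- (1a)
    intro i c
    rw [lam_col B Λ d hcompat, dlstar B d hd, euler_single_left]
  · -- (1b)
    intro j c
    rw [lam_skew Λ hΛskew, lam_col B Λ d hcompat, drstar B d hd hDBskew,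
      euler_single_right]
  · -- (2)
    intro b c
    rw [sub_star_eq B d hd hDBskew, sub_star_eq B d hd hDBskew,
      lam_Bv_Bv B Λ d hd hDBskew hcompat]
  · -- (3)
    intro b c v w
    have e1 : -(rstar B b) - lstar B (v - b)
        = fun r => -((∑ i, B r i * b i) + lstar B v r) := by
      funext r
      have h1 : rstar B b r - lstar B b r = ∑ i, B r i * b i :=
        congrFun (sub_star_eq B d hd hDBskew b) r
      have h2 : lstar B (v - b) r = lstar B v r - lstar B b r := by
        simp only [lstar, Pi.sub_apply, ← Finset.sum_sub_distrib]
        exact Finset.sum_congr rfl fun j _ => by ring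
      simp only [Pi.sub_apply, Pi.neg_apply]
      linarith
    have e2 : -(rstar B c) - lstar B (w - c)
        = fun r => -((∑ i, B r i * c i) + lstar B w r) := by
      funext r
      have h1 : rstar B c r - lstar B c r = ∑ i, B r i * c i :=
        congrFun (sub_star_eq B d hd hDBskew c) r
      have h2 : lstar B (w - c) r = lstar B w r - lstar B c r := by
        simp only [lstar, Pi.sub_apply, ← Finset.sum_sub_distrib]
        exact Finset.sum_congr rfl fun j _ => by ring
      simp only [Pi.sub_apply, Pi.neg_apply]
      linarith
    rw [e1, e2]
    have hexp := lam_expand Λ (fun r => ∑ i, B r i * b i) (lstar B v)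
      (fun r => ∑ i, B r i * c i) (lstar B w)
    rw [hexp]
    have h1 := lam_Bv_Bv B Λ d hd hDBskew hcompat b c
    have h2 := lam_Bv_lstar B Λ d hd hcompat b w
    have h3 : lam Λ (lstar B v) (fun r => ∑ i, B r i * c i) = - euler d B c v := by
      rw [lam_skew Λ hΛskew, lam_Bv_lstar B Λ d hd hcompat c v]
    rw [h1, h2, h3, euler_sub_right, euler_sub_right]
    ring
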